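/- Let n ≥ 3 be odd, α > 0, and let q_1, …, q_n be pairwise distinct real numbers. Let Q be the n×n skew-symmetric matrix with Q_{ij} = q_{ij}|q_{ij}|^{−α−2}, let B(Q) be its (n+1)×(n+1) bordered matrix, and let Q' be the (n−1)×(n−1) skew-symmetric matrix obtained from Q by deleting its n-th row and n-th column. If Pf(B(Q)) · Pf(Q') ≠ 0, then there exist m ∈ ℝ^n and c ∈ ℝ such that ∑_{k≠j} Q_{jk} m_k + c = q_j for every j = 1, …, n. -/
import Mathlib


open scoped BigOperators

/-- The Pfaffian of an `n × n` real matrix (intended for skew-symmetric matrices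
with `n` even), given by the formula
`Pf A = (1/(2^k k!)) ∑_{σ ∈ S_{2k}} sgn(σ) ∏_{i=1}^k A_{σ(2i-1),σ(2i)}` with `k = n/2`. -/
noncomputable def Pf {n : ℕ} (A : Matrix (Fin n) (Fin n) ℝ) : ℝ :=
  (1 / (2 ^ (n / 2) * (Nat.factorial (n / 2)) : ℝ)) *
    ∑ σ : Equiv.Perm (Fin n), ((Equiv.Perm.sign σ : ℤ) : ℝ) *
      ∏ i : Fin (n / 2),
        A (σ ⟨2 * i.val, by have := i.isLt; omega⟩)
          (σ ⟨2 * i.val + 1, by have := i.isLt; omega⟩)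

/-- The bordered matrix `B(A)` of an `m × m` skew-symmetric matrix `A`. -/
def border {m : ℕ} (A : Matrix (Fin m) (Fin m) ℝ) :
    Matrix (Fin (m + 1)) (Fin (m + 1)) ℝ := fun i j =>
  if hi : (i : ℕ) < m then
    if hj : (j : ℕ) < m then A ⟨i, hi⟩ ⟨j, hj⟩ else 1
  else if (j : ℕ) < m then -1 else 0

/-- The permutation sum appearing in the Pfaffian. -/
noncomputable def PfSum {n : ℕ} (A : Matrix (Fin n) (Fin n) ℝ) : ℝ :=
  ∑ σ : Equiv.Perm (Fin n), ((Equiv.Perm.sign σ : ℤ) : ℝ) *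
      ∏ i : Fin (n / 2),
        A (σ ⟨2 * i.val, by have := i.isLt; omega⟩)
          (σ ⟨2 * i.val + 1, by have := i.isLt; omega⟩)

lemma Pf_eq_PfSum {n : ℕ} (A : Matrix (Fin n) (Fin n) ℝ) :
    Pf A = (1 / (2 ^ (n / 2) * (Nat.factorial (n / 2)) : ℝ)) * PfSum A := rfl

/-- If the entries of `A` are invariant under an odd permutation applied to both
indices, then the Pfaffian sum vanishes. -/
lemma PfSum_eq_zero_of_invariant {n : ℕ} (A : Matrix (Fin n) (Fin n) ℝ)
    (τ : Equiv.Perm (Fin n)) (hτ : Equiv.Perm.sign τ = -1)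
    (hA : ∀ a b, A (τ a) (τ b) = A a b) : PfSum A = 0 := by
  set F : Equiv.Perm (Fin n) → ℝ := fun σ =>
    ((Equiv.Perm.sign σ : ℤ) : ℝ) *
      ∏ i : Fin (n / 2),
        A (σ ⟨2 * i.val, by have := i.isLt; omega⟩)
          (σ ⟨2 * i.val + 1, by have := i.isLt; omega⟩) with hF
  have key : (∑ σ, -(F σ)) = ∑ σ, F σ := by
    refine Fintype.sum_equiv (Equiv.mulLeft τ) _ _ (fun σ => ?_)
    have hs : ((Equiv.Perm.sign (Equiv.mulLeft τ σ) : ℤ) : ℝ) =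
        -((Equiv.Perm.sign σ : ℤ) : ℝ) := by
      simp [Equiv.mulLeft, hτ]
    have hp : ∏ i : Fin (n / 2),
        A ((Equiv.mulLeft τ σ) ⟨2 * i.val, by have := i.isLt; omega⟩)
          ((Equiv.mulLeft τ σ) ⟨2 * i.val + 1, by have := i.isLt; omega⟩) =
        ∏ i : Fin (n / 2),
        A (σ ⟨2 * i.val, by have := i.isLt; omega⟩)
          (σ ⟨2 * i.val + 1, by have := i.isLt; omega⟩) := by
      refine Finset.prod_congr rfl (fun i _ => ?_)
      have hx : ∀ x : Fin n, (Equiv.mulLeft τ σ) x = τ (σ x) := fun x => rfl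
      rw [hx, hx, hA]
    show -(F σ) = F (Equiv.mulLeft τ σ)
    simp only [hF]
    rw [hs, hp]
    ring
  have key2 : PfSum A = ∑ σ, F σ := rfl
  rw [Finset.sum_neg_distrib] at key
  rw [key2]
  linarith

set_option maxHeartbeats 1600000 in
/-- Key lemma: if an even-sized skew-symmetric matrix has a nontrivial kernel
vector, then its Pfaffian sum vanishes. -/
lemma PfSum_eq_zero_of_kernel {n : ℕ} (hn : n = 2 * (n / 2))
    (A : Matrix (Fin n) (Fin n) ℝ)
    (hskew : ∀ a b, A a b = - A b a)
    (v : Fin n → ℝ) (hv : v ≠ 0) (hAv : A.mulVec v = 0) : PfSum A = 0 := by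
  -- pick m with v m ≠ 0
  obtain ⟨m, hm⟩ : ∃ m, v m ≠ 0 := by
    by_contra hc
    push_neg at hc
    exact hv (funext hc)
  -- coefficients
  obtain ⟨c, hc⟩ : ∃ c : Fin n → ℝ, ∀ j, c j = -(v j / v m) :=
    ⟨fun j => -(v j / v m), fun _ => rfl⟩
  -- the relation for entries in column m
  have hcol : ∀ a : Fin n, A a m = ∑ j ∈ Finset.univ.erase m, c j * A a j := by
    intro a
    have h0 : ∑ j, A a j * v j = 0 := congrFun hAv a
    rw [← Finset.add_sum_erase _ _ (Finset.mem_univ m)] at h0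
    have h1 : ∑ j ∈ Finset.univ.erase m, A a j * v j = -(A a m * v m) := by linarith
    have h2 : ∑ j ∈ Finset.univ.erase m, c j * A a j =
        (-(1 / v m)) * ∑ j ∈ Finset.univ.erase m, A a j * v j := by
      rw [Finset.mul_sum]
      refine Finset.sum_congr rfl (fun j _ => ?_)
      rw [hc]
      ring
    rw [h2, h1]
    field_simp
  -- the replacement matrices
  obtain ⟨B, hBm1, hBm2, hBoff, hBsym⟩ :
      ∃ B : Fin n → Matrix (Fin n) (Fin n) ℝ,
        (∀ j b, b ≠ m → B j m b = A j b) ∧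
        (∀ j a, a ≠ m → B j a m = A a j) ∧
        (∀ j a b, a ≠ m → b ≠ m → B j a b = A a b) ∧
        (∀ j, j ≠ m → ∀ a b, B j (Equiv.swap j m a) (Equiv.swap j m b) = B j a b) := by
    refine ⟨fun j a b => A (if a = m then j else a) (if b = m then j else b),
      ?_, ?_, ?_, ?_⟩
    · intro j b hb; simp [hb]
    · intro j a ha; simp [ha]
    · intro j a b ha hb; simp [ha, hb]
    · intro j hjm a b
      have hr : ∀ x : Fin n,
          (if Equiv.swap j m x = m then j else Equiv.swap j m x) =
          (if x = m then j else x) := by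
        intro x
        rcases eq_or_ne x j with rfl | hxj
        · simp [Equiv.swap_apply_left, hjm]
        · rcases eq_or_ne x m with rfl | hxm
          · simp [Equiv.swap_apply_right, hjm]
          · simp [Equiv.swap_apply_of_ne_of_ne hxj hxm, hxm]
      simp only [hr]
  -- each B j has vanishing Pfaffian sum
  have hBj : ∀ j ∈ Finset.univ.erase m, PfSum (B j) = 0 := by
    intro j hj
    have hjm : j ≠ m := Finset.ne_of_mem_erase hj
    exact PfSum_eq_zero_of_invariant (B j) (Equiv.swap j m)
      (Equiv.Perm.sign_swap hjm) (hBsym j hjm)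
  -- the decomposition of each permutation product
  have hdecomp : ∀ σ : Equiv.Perm (Fin n),
      (∏ i : Fin (n / 2),
        A (σ ⟨2 * i.val, by have := i.isLt; omega⟩)
          (σ ⟨2 * i.val + 1, by have := i.isLt; omega⟩)) =
      ∑ j ∈ Finset.univ.erase m, c j *
        ∏ i : Fin (n / 2),
          (B j) (σ ⟨2 * i.val, by have := i.isLt; omega⟩)
            (σ ⟨2 * i.val + 1, by have := i.isLt; omega⟩) := by
    intro σ
    obtain ⟨p, hpm⟩ : ∃ p : Fin n, σ p = m := ⟨σ⁻¹ m, by simp⟩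
    have hpl : (p : ℕ) < n := p.isLt
    obtain ⟨i₀, hi₀⟩ : ∃ i₀ : Fin (n / 2), (i₀ : ℕ) = (p : ℕ) / 2 :=
      ⟨⟨(p : ℕ) / 2, by omega⟩, rfl⟩
    -- indices other than i₀ avoid m
    have havoid : ∀ i : Fin (n / 2), i ≠ i₀ →
        σ ⟨2 * i.val, by have := i.isLt; omega⟩ ≠ m ∧
        σ ⟨2 * i.val + 1, by have := i.isLt; omega⟩ ≠ m := by
      intro i hi
      have hiv : (i : ℕ) ≠ (i₀ : ℕ) := fun hh => hi (Fin.ext hh)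
      constructor
      · intro hcon
        have he : (⟨2 * i.val, by have := i.isLt; omega⟩ : Fin n) = p :=
          σ.injective (by rw [hcon, hpm])
        have h3 : 2 * i.val = (p : ℕ) := congrArg Fin.val he
        omega
      · intro hcon
        have he : (⟨2 * i.val + 1, by have := i.isLt; omega⟩ : Fin n) = p :=
          σ.injective (by rw [hcon, hpm])
        have h3 : 2 * i.val + 1 = (p : ℕ) := congrArg Fin.val he
        omega
    -- the i₀-factor identity
    have hfac : A (σ ⟨2 * i₀.val, by have := i₀.isLt; omega⟩)
          (σ ⟨2 * i₀.val + 1, by have := i₀.isLt; omega⟩) =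
        ∑ j ∈ Finset.univ.erase m, c j *
          (B j) (σ ⟨2 * i₀.val, by have := i₀.isLt; omega⟩)
            (σ ⟨2 * i₀.val + 1, by have := i₀.isLt; omega⟩) := by
      obtain ⟨a, ha⟩ : ∃ a : Fin n, σ ⟨2 * i₀.val, by have := i₀.isLt; omega⟩ = a :=
        ⟨_, rfl⟩
      obtain ⟨b, hb⟩ : ∃ b : Fin n,
          σ ⟨2 * i₀.val + 1, by have := i₀.isLt; omega⟩ = b := ⟨_, rfl⟩
      rw [ha, hb]
      rcases Nat.even_or_odd (p : ℕ) with he | ho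
      · -- p even : a = m
        obtain ⟨t, ht⟩ := he
        have hap : (⟨2 * i₀.val, by have := i₀.isLt; omega⟩ : Fin n) = p :=
          Fin.ext (by show 2 * (i₀ : ℕ) = (p : ℕ); omega)
        have ham : a = m := by rw [← ha, hap, hpm]
        have hbm : b ≠ m := by
          intro hcon
          have he2 : (⟨2 * i₀.val + 1, by have := i₀.isLt; omega⟩ : Fin n) = p :=
            σ.injective (by rw [hb, hcon, hpm])
          have h3 : 2 * i₀.val + 1 = (p : ℕ) := congrArg Fin.val he2
          omega
        rw [ham]
        have hs1 : A m b = - A b m := hskew m b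
        rw [hs1, hcol b, ← Finset.sum_neg_distrib]
        refine Finset.sum_congr rfl (fun j hj => ?_)
        rw [hBm1 j b hbm]
        have hs2 : A j b = - A b j := hskew j b
        rw [hs2]
        ring
      · -- p odd : b = m
        have hbp : (⟨2 * i₀.val + 1, by have := i₀.isLt; omega⟩ : Fin n) = p := by
          obtain ⟨t, ht⟩ := ho
          exact Fin.ext (by show 2 * (i₀ : ℕ) + 1 = (p : ℕ); omega)
        have hbm : b = m := by rw [← hb, hbp, hpm]
        have ham : a ≠ m := by
          intro hcon
          have he2 : (⟨2 * i₀.val, by have := i₀.isLt; omega⟩ : Fin n) = p :=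
            σ.injective (by rw [ha, hcon, hpm])
          have h3 : 2 * i₀.val = (p : ℕ) := congrArg Fin.val he2
          have h4 : 2 * i₀.val + 1 = (p : ℕ) := congrArg Fin.val hbp
          omega
        rw [hbm, hcol a]
        refine Finset.sum_congr rfl (fun j hj => ?_)
        rw [hBm2 j a ham]
    -- split off i₀
    calc (∏ i : Fin (n / 2),
        A (σ ⟨2 * i.val, by have := i.isLt; omega⟩)
          (σ ⟨2 * i.val + 1, by have := i.isLt; omega⟩))
        = A (σ ⟨2 * i₀.val, by have := i₀.isLt; omega⟩)
            (σ ⟨2 * i₀.val + 1, by have := i₀.isLt; omega⟩) *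
          ∏ i ∈ Finset.univ.erase i₀,
            A (σ ⟨2 * i.val, by have := i.isLt; omega⟩)
              (σ ⟨2 * i.val + 1, by have := i.isLt; omega⟩) :=
        (Finset.mul_prod_erase _ _ (Finset.mem_univ i₀)).symm
      _ = (∑ j ∈ Finset.univ.erase m, c j *
            (B j) (σ ⟨2 * i₀.val, by have := i₀.isLt; omega⟩)
              (σ ⟨2 * i₀.val + 1, by have := i₀.isLt; omega⟩)) *
          ∏ i ∈ Finset.univ.erase i₀,
            A (σ ⟨2 * i.val, by have := i.isLt; omega⟩)
              (σ ⟨2 * i.val + 1, by have := i.isLt; omega⟩) := by rw [hfac]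
      _ = ∑ j ∈ Finset.univ.erase m, c j *
            ∏ i : Fin (n / 2),
              (B j) (σ ⟨2 * i.val, by have := i.isLt; omega⟩)
                (σ ⟨2 * i.val + 1, by have := i.isLt; omega⟩) := by
          rw [Finset.sum_mul]
          refine Finset.sum_congr rfl (fun j hj => ?_)
          have hsplitB : (∏ i : Fin (n / 2),
              (B j) (σ ⟨2 * i.val, by have := i.isLt; omega⟩)
                (σ ⟨2 * i.val + 1, by have := i.isLt; omega⟩)) =
              (B j) (σ ⟨2 * i₀.val, by have := i₀.isLt; omega⟩)
                (σ ⟨2 * i₀.val + 1, by have := i₀.isLt; omega⟩) *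
              ∏ i ∈ Finset.univ.erase i₀,
                (B j) (σ ⟨2 * i.val, by have := i.isLt; omega⟩)
                  (σ ⟨2 * i.val + 1, by have := i.isLt; omega⟩) :=
            (Finset.mul_prod_erase _ _ (Finset.mem_univ i₀)).symm
          rw [hsplitB]
          have hrest : ∏ i ∈ Finset.univ.erase i₀,
              (B j) (σ ⟨2 * i.val, by have := i.isLt; omega⟩)
                (σ ⟨2 * i.val + 1, by have := i.isLt; omega⟩) =
              ∏ i ∈ Finset.univ.erase i₀,
              A (σ ⟨2 * i.val, by have := i.isLt; omega⟩)
                (σ ⟨2 * i.val + 1, by have := i.isLt; omega⟩) := by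
            refine Finset.prod_congr rfl (fun i hi => ?_)
            obtain ⟨h1, h2⟩ := havoid i (Finset.ne_of_mem_erase hi)
            exact hBoff j _ _ h1 h2
          rw [hrest]
          ring
  -- put it together
  have hfinal : PfSum A = ∑ j ∈ Finset.univ.erase m, c j * PfSum (B j) := by
    unfold PfSum
    calc (∑ σ : Equiv.Perm (Fin n), ((Equiv.Perm.sign σ : ℤ) : ℝ) *
        ∏ i : Fin (n / 2),
          A (σ ⟨2 * i.val, by have := i.isLt; omega⟩)
            (σ ⟨2 * i.val + 1, by have := i.isLt; omega⟩))
        = ∑ σ : Equiv.Perm (Fin n), ∑ j ∈ Finset.univ.erase m,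
            c j * (((Equiv.Perm.sign σ : ℤ) : ℝ) *
              ∏ i : Fin (n / 2),
                (B j) (σ ⟨2 * i.val, by have := i.isLt; omega⟩)
                  (σ ⟨2 * i.val + 1, by have := i.isLt; omega⟩)) := by
          refine Finset.sum_congr rfl (fun σ _ => ?_)
          rw [hdecomp σ, Finset.mul_sum]
          refine Finset.sum_congr rfl (fun j _ => ?_)
          ring
      _ = ∑ j ∈ Finset.univ.erase m, ∑ σ : Equiv.Perm (Fin n),
            c j * (((Equiv.Perm.sign σ : ℤ) : ℝ) *
              ∏ i : Fin (n / 2),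
                (B j) (σ ⟨2 * i.val, by have := i.isLt; omega⟩)
                  (σ ⟨2 * i.val + 1, by have := i.isLt; omega⟩)) :=
          Finset.sum_comm
      _ = ∑ j ∈ Finset.univ.erase m, c j *
            ∑ σ : Equiv.Perm (Fin n), ((Equiv.Perm.sign σ : ℤ) : ℝ) *
              ∏ i : Fin (n / 2),
                (B j) (σ ⟨2 * i.val, by have := i.isLt; omega⟩)
                  (σ ⟨2 * i.val + 1, by have := i.isLt; omega⟩) := by
          refine Finset.sum_congr rfl (fun j _ => ?_)
          rw [Finset.mul_sum]
  rw [hfinal]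
  refine Finset.sum_eq_zero (fun j hj => ?_)
  rw [hBj j hj, mul_zero]

/-- Nonzero Pfaffian implies nonzero determinant, for even-sized skew matrices. -/
lemma det_ne_zero_of_Pf {n : ℕ} (hn : n = 2 * (n / 2))
    (A : Matrix (Fin n) (Fin n) ℝ) (hskew : ∀ a b, A a b = - A b a)
    (hPf : Pf A ≠ 0) : A.det ≠ 0 := by
  intro hdet
  obtain ⟨v, hv, hAv⟩ := (Matrix.exists_mulVec_eq_zero_iff).2 hdet
  have h0 := PfSum_eq_zero_of_kernel hn A hskew v hv hAv
  exact hPf (by rw [Pf_eq_PfSum, h0, mul_zero])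

theorem stmt6 (n : ℕ) (hn : 3 ≤ n) (hodd : Odd n) (α : ℝ) (hα : 0 < α)
    (q : Fin n → ℝ) (hq : Function.Injective q)
    (Q : Matrix (Fin n) (Fin n) ℝ)
    (hQ : ∀ i j, Q i j = (q i - q j) * |q i - q j| ^ (-α - 2))
    (Q' : Matrix (Fin (n - 1)) (Fin (n - 1)) ℝ)
    (hQ' : ∀ i j : Fin (n - 1), Q' i j =
      Q ⟨i, by have := i.isLt; omega⟩ ⟨j, by have := j.isLt; omega⟩)
    (h : Pf (border Q) * Pf Q' ≠ 0) :
    ∃ (m : Fin n → ℝ) (c : ℝ),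
      ∀ j, (∑ k ∈ Finset.univ.erase j, Q j k * m k) + c = q j := by
  have hQskew : ∀ i j, Q i j = - Q j i := by
    intro i j
    rw [hQ, hQ, abs_sub_comm]
    ring
  have hQdiag : ∀ i, Q i i = 0 := by
    intro i
    rw [hQ]
    simp
  have hBskew : ∀ a b : Fin (n + 1), border Q a b = - border Q b a := by
    intro a b
    unfold border
    by_cases ha : (a : ℕ) < n <;> by_cases hb : (b : ℕ) < n <;>
      simp [ha, hb]
    exact hQskew _ _
  have h1 : Pf (border Q) ≠ 0 := fun hc => h (by rw [hc, zero_mul])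
  have heven : n + 1 = 2 * ((n + 1) / 2) := by
    obtain ⟨k, hk⟩ := hodd
    omega
  have hdet : (border Q).det ≠ 0 := det_ne_zero_of_Pf heven (border Q) hBskew h1
  set w : Fin (n + 1) → ℝ := fun i => if hi : (i : ℕ) < n then q ⟨i, hi⟩ else 0 with hw
  set x : Fin (n + 1) → ℝ := (border Q)⁻¹.mulVec w with hxdef
  have hx : (border Q).mulVec x = w := by
    rw [hxdef, Matrix.mulVec_mulVec,
      Matrix.mul_nonsing_inv _ (isUnit_iff_ne_zero.2 hdet), Matrix.one_mulVec]
  refine ⟨fun k => x (Fin.castSucc k), x (Fin.last n), fun j => ?_⟩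
  have hj0 : ∑ k : Fin (n + 1), border Q ⟨j.val, by omega⟩ k * x k
      = w ⟨j.val, by omega⟩ := by
    have := congrFun hx ⟨j.val, by omega⟩
    simpa [Matrix.mulVec, dotProduct] using this
  rw [Fin.sum_univ_castSucc] at hj0
  have hlast : border Q (⟨j.val, by omega⟩ : Fin (n + 1)) (Fin.last n) = 1 := by
    unfold border
    simp [j.isLt]
  have hcast : ∀ k : Fin n,
      border Q (⟨j.val, by omega⟩ : Fin (n + 1)) (Fin.castSucc k) = Q j k := by
    intro k
    unfold border
    simp [j.isLt, k.isLt, Fin.castSucc]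
  have hwj : w (⟨j.val, by omega⟩ : Fin (n + 1)) = q j := by
    simp [hw, j.isLt]
  rw [hlast, hwj] at hj0
  rw [Finset.sum_congr rfl (fun k _ => by rw [hcast k])] at hj0
  rw [Finset.sum_erase _ (by rw [hQdiag]; ring)]
  rw [one_mul] at hj0
  exact hj0
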